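/- Let q be a prime power and 0 ≤ k ≤ n. The map Ind_1, assigning to each k-dimensional subspace X of F_q^n the number of k-dimensional subspaces Y with Y < X in the Ferrers-tableaux order, is a bijection from the set of k-dimensional subspaces of F_q^n onto {0, 1, ..., [n choose k]_q - 1}. -/

import Mathlib

/-- The Ferrers diagrams embedded in a `k × η` box, represented by the vector of their
column counts read from the right: `c i` is the number of dots in column `i+1`
(counted from the right), each column has at most `k` dots, and the counts are
nonincreasing from right to left. -/
def ferrersBox (k η : ℕ) : Finset (Fin η → Fin (k + 1)) :=
  Finset.univ.filter (fun c => ∀ i j : Fin η, i ≤ j → c j ≤ c i)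

/-- `pBox m k η` is the number of Ferrers diagrams of size `m` fitting in a `k × η` box. -/
def pBox (m k η : ℕ) : ℕ :=
  ((ferrersBox k η).filter (fun c => ∑ i, (c i : ℕ) = m)).card

/-- `A` (given by its rows) is in reduced row echelon form with pivot columns `piv`. -/
def IsRREFPiv {F : Type} [Field F] {k n : ℕ} (A : Fin k → Fin n → F)
    (piv : Fin k → Fin n) : Prop :=
  StrictMono piv ∧ (∀ i, A i (piv i) = 1) ∧ (∀ i j, j < piv i → A i j = 0) ∧
    (∀ i i', i' ≠ i → A i' (piv i) = 0)

/-- `A` is the (unique) RREF generator matrix of `X` with pivot columns `piv`: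
it is in RREF and its rows form a basis of `X`. -/
def GeneratesRREF {F : Type} [Field F] {k n : ℕ} (A : Fin k → Fin n → F)
    (piv : Fin k → Fin n) (X : Submodule F (Fin n → F)) : Prop :=
  IsRREFPiv A piv ∧ LinearIndependent F A ∧ Submodule.span F (Set.range A) = X

/-- `c` enumerates the non-pivot positions in strictly decreasing order:
`c i` is the `(i+1)`-th non-pivot column position counted from the right. -/
def NPEnum {n k : ℕ} (piv : Fin k → Fin n) (c : Fin (n - k) → Fin n) : Prop :=
  (∀ i i' : Fin (n - k), i < i' → c i' < c i) ∧
    (∀ p : Fin n, (∃ i, c i = p) ↔ ¬∃ r, piv r = p)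

/-- The number of dots in the `(i+1)`-th column (from the right) of the Ferrers diagram
of the echelon Ferrers form: the number of rows whose pivot lies strictly to the left
of the `(i+1)`-th non-pivot position from the right. -/
def diagCol {n k : ℕ} (piv : Fin k → Fin n) (c : Fin (n - k) → Fin n)
    (i : Fin (n - k)) : ℕ :=
  (Finset.univ.filter (fun t : Fin k => piv t < c i)).card

/-- `|F_X|`: the total number of dots of the Ferrers diagram. -/
def diagSize {n k : ℕ} (piv : Fin k → Fin n) (c : Fin (n - k) → Fin n) : ℕ :=
  ∑ i, diagCol piv c i

/-- The number of dots in row `t` of the Ferrers diagram. -/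
def rowdots {n k : ℕ} (piv : Fin k → Fin n) (c : Fin (n - k) → Fin n) (t : Fin k) : ℕ :=
  (Finset.univ.filter (fun i : Fin (n - k) => piv t < c i)).card

/-- The number of dots in the rows strictly above row `t`. -/
def rowPrefix {n k : ℕ} (piv : Fin k → Fin n) (c : Fin (n - k) → Fin n) (t : Fin k) : ℕ :=
  ∑ s ∈ Finset.univ.filter (fun s : Fin k => s < t), rowdots piv c s

/-- The position (1-based, counted from the right) of the dot in row `t`, column `c i`,
among the dots of row `t`. -/
def posInRow {n k : ℕ} (piv : Fin k → Fin n) (c : Fin (n - k) → Fin n) (t : Fin k)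
    (i : Fin (n - k)) : ℕ :=
  (Finset.univ.filter (fun i' : Fin (n - k) => i' ≤ i ∧ piv t < c i')).card

/-- `{x}`: the integer whose base-`q` digits are the entries of the Ferrers tableaux
form (the RREF entries in the dots of the Ferrers diagram), read from right to left
and top to bottom, the first entry being the most significant digit; elements of `F`
are identified with `{0,…,q-1}` via `e`. -/
def xVal (q : ℕ) {F : Type} [Field F] (e : F ≃ Fin q) {n k : ℕ}
    (A : Fin k → Fin n → F) (piv : Fin k → Fin n) (c : Fin (n - k) → Fin n) : ℕ :=
  ∑ t : Fin k, ∑ i : Fin (n - k),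
    if piv t < c i then
      (e (A t (c i)) : ℕ) *
        q ^ (diagSize piv c - rowPrefix piv c t - posInRow piv c t i)
    else 0

/-- `ind_{|F_X|}(F_X)`: the number of Ferrers diagrams of size `|F_X|` in the
`k × (n-k)` box which strictly precede the diagram of `X` (a diagram precedes
another iff it has more dots at the least column, from the right, where they differ). -/
def diagInd {n k : ℕ} (piv : Fin k → Fin n) (c : Fin (n - k) → Fin n) : ℕ :=
  ((ferrersBox k (n - k)).filter
    (fun G : Fin (n - k) → Fin (k + 1) =>
      (∑ i, (G i : ℕ)) = diagSize piv c ∧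
        ∃ i, (∀ t, t < i → (G t : ℕ) = diagCol piv c t) ∧ diagCol piv c i < (G i : ℕ))).card

/-- `X < Y` in the Ferrers-tableaux order: either `|F_X| > |F_Y|`, or the diagrams have
equal size and `ind(F_X) < ind(F_Y)`, or the diagrams coincide and the entry vector of
the Ferrers tableaux form of `X` is lexicographically smaller than that of `Y`
(equivalently, has a smaller base-`q` value `{x}`). -/
def ftLt (q : ℕ) {F : Type} [Field F] (e : F ≃ Fin q) (n k : ℕ)
    (X Y : Submodule F (Fin n → F)) : Prop :=
  ∃ (A : Fin k → Fin n → F) (pivA : Fin k → Fin n) (cA : Fin (n - k) → Fin n)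
    (B : Fin k → Fin n → F) (pivB : Fin k → Fin n) (cB : Fin (n - k) → Fin n),
    GeneratesRREF A pivA X ∧ NPEnum pivA cA ∧ GeneratesRREF B pivB Y ∧ NPEnum pivB cB ∧
      (diagSize pivB cB < diagSize pivA cA ∨
        (diagSize pivA cA = diagSize pivB cB ∧ diagInd pivA cA < diagInd pivB cB) ∨
        ((∀ i, diagCol pivA cA i = diagCol pivB cB i) ∧
          xVal q e A pivA cA < xVal q e B pivB cB))

/-- The Gaussian coefficient `[a choose b]_q`: the number of `b`-dimensional subspaces
of `F^a` (for `F` a field with `q` elements). -/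
noncomputable def gaussNum (F : Type) [Field F] (a b : ℕ) : ℕ :=
  Nat.card {X : Submodule F (Fin a → F) // Module.finrank F X = b}

/-- `ftInd q e n k X` (the map `Ind_1`): the number of `k`-dimensional subspaces `Y`
of `F^n` with `Y < X` in the Ferrers-tableaux order. -/
noncomputable def ftInd (q : ℕ) {F : Type} [Field F] (e : F ≃ Fin q) (n k : ℕ)
    (X : Submodule F (Fin n → F)) : ℕ :=
  Nat.card {Y : Submodule F (Fin n → F) // Module.finrank F Y = k ∧ ftLt q e n k Y X}


namespace FT
open Finset
attribute [local instance] Classical.propDecidable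

variable {F : Type} [Field F] {n k : ℕ}

/-- first nonzero coordinate exists -/
lemma exists_first (x : Fin n → F) (hx : x ≠ 0) :
    ∃ p, x p ≠ 0 ∧ ∀ j, j < p → x j = 0 := by
  have hne : (univ.filter (fun j => x j ≠ 0)).Nonempty := by
    rcases Function.ne_iff.mp hx with ⟨j, hj⟩
    exact ⟨j, by simpa using hj⟩
  refine ⟨(univ.filter (fun j => x j ≠ 0)).min' hne, ?_, ?_⟩
  · have := Finset.min'_mem _ hne; simpa using this
  · intro j hj
    by_contra hxj
    exact absurd (Finset.min'_le _ j (by simp [hxj])) (not_le.mpr hj)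

noncomputable def pivSet (X : Submodule F (Fin n → F)) : Finset (Fin n) :=
  univ.filter (fun p => ∃ x ∈ X, x p ≠ 0 ∧ ∀ j, j < p → x j = 0)

lemma mem_pivSet {X : Submodule F (Fin n → F)} {p : Fin n} :
    p ∈ pivSet X ↔ ∃ x ∈ X, x p ≠ 0 ∧ ∀ j, j < p → x j = 0 := by
  simp [pivSet]

variable [Fintype F]

/-- evaluation at pivot coordinates -/
def evalP (X : Submodule F (Fin n → F)) : X →ₗ[F] (↥(pivSet X) → F) where
  toFun x := fun p => x.1 p.1
  map_add' x y := rfl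
  map_smul' c x := rfl

lemma evalP_inj (X : Submodule F (Fin n → F)) : Function.Injective (evalP X) := by
  rw [injective_iff_map_eq_zero]
  intro x hx
  by_contra hx0
  have hx1 : (x : Fin n → F) ≠ 0 := fun h => hx0 (Subtype.ext h)
  obtain ⟨p, hp1, hp2⟩ := exists_first _ hx1
  have hpm : p ∈ pivSet X := mem_pivSet.mpr ⟨x, x.2, hp1, hp2⟩
  have : (evalP X) x ⟨p, hpm⟩ = 0 := by rw [hx]; rfl
  exact hp1 this

lemma card_pivSet_le (X : Submodule F (Fin n → F)) (hX : Module.finrank F X = k) :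
    (pivSet X).card ≤ k := by
  classical
  -- choose witnesses
  have hw : ∀ p : ↥(pivSet X), ∃ x, x ∈ X ∧ x (p : Fin n) ≠ 0 ∧ ∀ j, j < (p : Fin n) → x j = 0 :=
    fun p => mem_pivSet.mp p.2
  choose w hw1 hw2 hw3 using hw
  have hli : LinearIndependent F (fun p : ↥(pivSet X) => (⟨w p, hw1 p⟩ : X)) := by
    rw [Fintype.linearIndependent_iff]
    intro g hg
    by_contra hg0
    push_neg at hg0
    obtain ⟨p0, hp0⟩ := hg0
    set s := univ.filter (fun p : ↥(pivSet X) => g p ≠ 0) with hs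
    have hsne : s.Nonempty := ⟨p0, by simp [hs, hp0]⟩
    set q := s.min' hsne with hq
    have hqs : g q ≠ 0 := by have := Finset.min'_mem s hsne; rw [← hq] at this; simpa [hs] using this
    have := congrArg (fun z : X => (z : Fin n → F) (q : Fin n)) hg
    simp only [Submodule.coe_sum, Submodule.coe_smul] at this
    rw [Finset.sum_apply] at this
    have hterm : ∀ p ∈ (univ : Finset ↥(pivSet X)), p ≠ q →
        (g p • w p) (q : Fin n) = 0 := by
      intro p _ hpq
      by_cases hgp : g p = 0
      · simp [hgp]
      · have hqp : q < p := by
          rcases lt_trichotomy q p with h | h | h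
          · exact h
          · exact absurd h.symm hpq
          · exact absurd (Finset.min'_le s p (by simp [hs, hgp])) (not_le.mpr h)
        have : w p (q : Fin n) = 0 := hw3 p _ hqp
        simp [Pi.smul_apply, this]
    rw [Finset.sum_eq_single q hterm (by simp)] at this
    simp only [Pi.smul_apply, smul_eq_mul] at this
    exact (mul_ne_zero hqs (hw2 q)) this
  have := hli.fintype_card_le_finrank
  simpa [hX] using this

lemma card_pivSet (X : Submodule F (Fin n → F)) (hX : Module.finrank F X = k) :
    (pivSet X).card = k := by
  refine le_antisymm (card_pivSet_le X hX) ?_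
  have h1 : Module.finrank F X ≤ Module.finrank F (↥(pivSet X) → F) :=
    LinearMap.finrank_le_finrank_of_injective (evalP_inj X)
  rw [hX, Module.finrank_pi] at h1
  simpa using h1

noncomputable def evalE (X : Submodule F (Fin n → F)) (hX : Module.finrank F X = k) :
    X ≃ₗ[F] (↥(pivSet X) → F) :=
  (evalP X).linearEquivOfInjective (evalP_inj X)
    (by rw [hX, Module.finrank_pi, Fintype.card_coe, card_pivSet X hX])

lemma evalE_apply (X : Submodule F (Fin n → F)) (hX : Module.finrank F X = k) (x : X) :
    evalE X hX x = evalP X x := rfl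

noncomputable def cpiv (X : Submodule F (Fin n → F)) (hX : Module.finrank F X = k) :
    Fin k → Fin n :=
  fun i => ((pivSet X).orderIsoOfFin (card_pivSet X hX) i : Fin n)

lemma cpiv_mem (X : Submodule F (Fin n → F)) (hX : Module.finrank F X = k) (i : Fin k) :
    cpiv X hX i ∈ pivSet X := ((pivSet X).orderIsoOfFin (card_pivSet X hX) i).2

lemma cpiv_strictMono (X : Submodule F (Fin n → F)) (hX : Module.finrank F X = k) :
    StrictMono (cpiv X hX) := fun i j hij => by
  exact ((pivSet X).orderIsoOfFin (card_pivSet X hX)).strictMono hij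

noncomputable def cA (X : Submodule F (Fin n → F)) (hX : Module.finrank F X = k) :
    Fin k → Fin n → F :=
  fun i => ((evalE X hX).symm
    (Pi.single ((pivSet X).orderIsoOfFin (card_pivSet X hX) i) 1) : Fin n → F)

lemma cA_mem (X : Submodule F (Fin n → F)) (hX : Module.finrank F X = k) (i : Fin k) :
    cA X hX i ∈ X :=
  ((evalE X hX).symm (Pi.single ((pivSet X).orderIsoOfFin (card_pivSet X hX) i) 1)).2

lemma cA_pivot (X : Submodule F (Fin n → F)) (hX : Module.finrank F X = k) (i j : Fin k) :
    cA X hX i (cpiv X hX j) = if j = i then 1 else 0 := by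
  classical
  have h : evalP X ((evalE X hX).symm
      (Pi.single ((pivSet X).orderIsoOfFin (card_pivSet X hX) i) 1)) =
      Pi.single ((pivSet X).orderIsoOfFin (card_pivSet X hX) i) 1 := by
    rw [← evalE_apply X hX, LinearEquiv.apply_symm_apply]
  have h2 := congrFun h ((pivSet X).orderIsoOfFin (card_pivSet X hX) j)
  have h3 : cA X hX i (cpiv X hX j) =
      (Pi.single ((pivSet X).orderIsoOfFin (card_pivSet X hX) i) (1 : F) :
        ↥(pivSet X) → F) ((pivSet X).orderIsoOfFin (card_pivSet X hX) j) := h2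
  rw [h3, Pi.single_apply]
  congr 1
  simp only [eq_iff_iff]
  constructor
  · intro h'; exact ((pivSet X).orderIsoOfFin (card_pivSet X hX)).injective h'
  · intro h'; rw [h']

lemma mem_pivSet_iff_cpiv (X : Submodule F (Fin n → F)) (hX : Module.finrank F X = k)
    (p : Fin n) : p ∈ pivSet X ↔ ∃ i, cpiv X hX i = p := by
  constructor
  · intro hp
    obtain ⟨i, hi⟩ := ((pivSet X).orderIsoOfFin (card_pivSet X hX)).surjective ⟨p, hp⟩
    exact ⟨i, by rw [cpiv, hi]⟩
  · rintro ⟨i, rfl⟩; exact cpiv_mem X hX i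

lemma cA_left_zero (X : Submodule F (Fin n → F)) (hX : Module.finrank F X = k)
    (i : Fin k) (j : Fin n) (hj : j < cpiv X hX i) : cA X hX i j = 0 := by
  by_contra hne
  have hAne : cA X hX i ≠ 0 := fun h => hne (by rw [h]; rfl)
  obtain ⟨p, hp1, hp2⟩ := exists_first (cA X hX i) hAne
  have hple : p ≤ j := by
    by_contra h
    exact hne (hp2 j (lt_of_not_ge h))
  have hpm : p ∈ pivSet X := mem_pivSet.mpr ⟨cA X hX i, cA_mem X hX i, hp1, hp2⟩
  obtain ⟨t, ht⟩ := (mem_pivSet_iff_cpiv X hX p).mp hpm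
  have : cA X hX i (cpiv X hX t) ≠ 0 := by rw [ht]; exact hp1
  rw [cA_pivot] at this
  have hti : t = i := by by_contra h; simp [h] at this
  rw [hti] at ht
  rw [ht] at hj
  exact absurd hj (not_lt.mpr hple)

lemma cA_linIndep (X : Submodule F (Fin n → F)) (hX : Module.finrank F X = k) :
    LinearIndependent F (cA X hX) := by
  classical
  rw [Fintype.linearIndependent_iff]
  intro g hg i
  have h : ∑ t, g t • cA X hX t = 0 := hg
  have h2 := congrFun h (cpiv X hX i)
  rw [Finset.sum_apply] at h2
  have h3 : ∀ t ∈ (univ : Finset (Fin k)), t ≠ i → (g t • cA X hX t) (cpiv X hX i) = 0 := by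
    intro t _ hti
    have := cA_pivot X hX t i
    rw [if_neg (fun h => hti h.symm)] at this
    simp [this]
  rw [Finset.sum_eq_single i h3 (by simp)] at h2
  have := cA_pivot X hX i i
  rw [if_pos rfl] at this
  simpa [this] using h2

lemma cA_span (X : Submodule F (Fin n → F)) (hX : Module.finrank F X = k) :
    Submodule.span F (Set.range (cA X hX)) = X := by
  classical
  -- the family inside X
  set f : Fin k → X := fun i =>
    (evalE X hX).symm (Pi.single ((pivSet X).orderIsoOfFin (card_pivSet X hX) i) 1) with hf
  have hrange : Set.range (cA X hX) = X.subtype '' Set.range f := by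
    rw [← Set.range_comp]; rfl
  rw [hrange, Submodule.span_image]
  have hspan : Submodule.span F (Set.range f) = ⊤ := by
    have hs : Set.range (fun i : Fin k =>
        (Pi.single ((pivSet X).orderIsoOfFin (card_pivSet X hX) i) 1 : ↥(pivSet X) → F)) =
        Set.range (fun p : ↥(pivSet X) => (Pi.single p 1 : ↥(pivSet X) → F)) := by
      have h := Function.Surjective.range_comp
        ((pivSet X).orderIsoOfFin (card_pivSet X hX)).surjective
        (fun p : ↥(pivSet X) => (Pi.single p 1 : ↥(pivSet X) → F))
      exact h
    have hsp : Submodule.span F (Set.range (fun p : ↥(pivSet X) =>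
        (Pi.single p 1 : ↥(pivSet X) → F))) = ⊤ := by
      have := (Pi.basisFun F ↥(pivSet X)).span_eq
      simpa [Pi.basisFun] using this
    have hf2 : f = (evalE X hX).symm ∘ (fun i : Fin k =>
        (Pi.single ((pivSet X).orderIsoOfFin (card_pivSet X hX) i) 1 : ↥(pivSet X) → F)) := rfl
    rw [hf2, Set.range_comp, Submodule.span_image_linearEquiv, hs, hsp]
    simp
  rw [hspan, Submodule.map_top, Submodule.range_subtype]

lemma cGenerates (X : Submodule F (Fin n → F)) (hX : Module.finrank F X = k) :
    (StrictMono (cpiv X hX) ∧ (∀ i, cA X hX i (cpiv X hX i) = 1) ∧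
      (∀ i j, j < cpiv X hX i → cA X hX i j = 0) ∧
      (∀ i i', i' ≠ i → cA X hX i' (cpiv X hX i) = 0)) ∧
    LinearIndependent F (cA X hX) ∧ Submodule.span F (Set.range (cA X hX)) = X := by
  refine ⟨⟨cpiv_strictMono X hX, ?_, cA_left_zero X hX, ?_⟩, cA_linIndep X hX, cA_span X hX⟩
  · intro i; have := cA_pivot X hX i i; rwa [if_pos rfl] at this
  · intro i i' hi
    have := cA_pivot X hX i' i
    rwa [if_neg (fun h => hi h.symm)] at this


lemma cGeneratesRREF (X : Submodule F (Fin n → F)) (hX : Module.finrank F X = k) :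
    GeneratesRREF (cA X hX) (cpiv X hX) X := cGenerates X hX

omit [Fintype F] in
lemma rref_first {X : Submodule F (Fin n → F)} {B : Fin k → Fin n → F} {piv : Fin k → Fin n}
    (hB : GeneratesRREF B piv X) (x : Fin n → F) (hx : x ∈ X) (p : Fin n)
    (hp : x p ≠ 0) (hp0 : ∀ j, j < p → x j = 0) : ∃ i, piv i = p := by
  classical
  obtain ⟨⟨hmono, hdiag, hleft, hcol⟩, hli, hspan⟩ := hB
  rw [← hspan] at hx
  obtain ⟨g, hg⟩ := (Submodule.mem_span_range_iff_exists_fun F).mp hx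
  have hgne : ∃ i, g i ≠ 0 := by
    by_contra h
    push_neg at h
    apply hp
    rw [← hg]
    simp [h]
  set s := univ.filter (fun i => g i ≠ 0) with hs
  have hsne : s.Nonempty := by obtain ⟨i, hi⟩ := hgne; exact ⟨i, by simp [hs, hi]⟩
  set q := s.min' hsne with hq
  have hgq : g q ≠ 0 := by have := s.min'_mem hsne; rw [← hq] at this; simpa [hs] using this
  have hxq : x (piv q) = g q := by
    rw [← hg, Finset.sum_apply]
    rw [Finset.sum_eq_single q (fun i _ hiq => by simp [hcol q i hiq]) (by simp)]
    simp [hdiag q]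
  have hxleft : ∀ j, j < piv q → x j = 0 := by
    intro j hj
    rw [← hg, Finset.sum_apply]
    apply Finset.sum_eq_zero
    intro i _
    by_cases hgi : g i = 0
    · simp [hgi]
    · have hqi : q ≤ i := s.min'_le i (by simp [hs, hgi])
      have : j < piv i := lt_of_lt_of_le hj (hmono.monotone hqi)
      simp [hleft i j this]
  refine ⟨q, ?_⟩
  rcases lt_trichotomy (piv q) p with h | h | h
  · exact absurd (hp0 _ h) (hxq ▸ hgq)
  · exact h
  · exact absurd (hxleft p h) hp

lemma gen_mem_pivSet {X : Submodule F (Fin n → F)} {B : Fin k → Fin n → F}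
    {piv : Fin k → Fin n} (hB : GeneratesRREF B piv X) (p : Fin n) :
    (∃ i, piv i = p) ↔ p ∈ pivSet X := by
  obtain ⟨⟨hmono, hdiag, hleft, hcol⟩, hli, hspan⟩ := hB
  constructor
  · rintro ⟨i, rfl⟩
    refine mem_pivSet.mpr ⟨B i, ?_, by rw [hdiag]; exact one_ne_zero, fun j hj => hleft i j hj⟩
    rw [← hspan]
    exact Submodule.subset_span (Set.mem_range_self i)
  · intro hp
    obtain ⟨x, hx, hp1, hp2⟩ := mem_pivSet.mp hp
    exact rref_first ⟨⟨hmono, hdiag, hleft, hcol⟩, hli, hspan⟩ x hx p hp1 hp2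

lemma gen_piv_unique {X : Submodule F (Fin n → F)} (hX : Module.finrank F X = k)
    {B : Fin k → Fin n → F} {piv : Fin k → Fin n} (hB : GeneratesRREF B piv X) :
    piv = cpiv X hX := by
  have h1 : ∀ i, piv i ∈ pivSet X := fun i => (gen_mem_pivSet hB (piv i)).mp ⟨i, rfl⟩
  have h2 : ∀ i, cpiv X hX i ∈ pivSet X := cpiv_mem X hX
  rw [Finset.orderEmbOfFin_unique (card_pivSet X hX) h1 hB.1.1,
    Finset.orderEmbOfFin_unique (card_pivSet X hX) h2 (cpiv_strictMono X hX)]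

lemma gen_A_unique {X : Submodule F (Fin n → F)} (hX : Module.finrank F X = k)
    {B : Fin k → Fin n → F} {piv : Fin k → Fin n} (hB : GeneratesRREF B piv X) :
    B = cA X hX := by
  have hpiv := gen_piv_unique hX hB
  obtain ⟨⟨hmono, hdiag, hleft, hcol⟩, hli, hspan⟩ := hB
  funext i
  have hBmem : B i ∈ X := by
    rw [← hspan]; exact Submodule.subset_span (Set.mem_range_self i)
  have hkey : evalP X ⟨B i, hBmem⟩ = evalP X ⟨cA X hX i, cA_mem X hX i⟩ := by
    funext q
    obtain ⟨j, hj⟩ := ((pivSet X).orderIsoOfFin (card_pivSet X hX)).surjective q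
    have hq : (q : Fin n) = cpiv X hX j := by rw [← hj]; rfl
    show B i (q : Fin n) = cA X hX i (q : Fin n)
    rw [hq, cA_pivot]
    by_cases hij : j = i
    · subst hij; rw [if_pos rfl, ← hpiv]; exact hdiag j
    · rw [if_neg hij, ← hpiv]; exact hcol j i (Ne.symm hij)
  have := evalP_inj X hkey
  exact congrArg Subtype.val this

noncomputable def cnp (X : Submodule F (Fin n → F)) (hX : Module.finrank F X = k) :
    Fin (n - k) → Fin n :=
  fun i => ((pivSet X)ᶜ.orderIsoOfFin
    (by rw [Finset.card_compl, card_pivSet X hX, Fintype.card_fin]) (Fin.rev i) : Fin n)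

lemma cnp_npenum (X : Submodule F (Fin n → F)) (hX : Module.finrank F X = k) :
    NPEnum (cpiv X hX) (cnp X hX) := by
  constructor
  · intro i i' hii
    have : Fin.rev i' < Fin.rev i := Fin.rev_lt_rev.mpr hii
    exact ((pivSet X)ᶜ.orderIsoOfFin _).strictMono this
  · intro p
    rw [← mem_pivSet_iff_cpiv X hX]
    constructor
    · rintro ⟨i, rfl⟩
      have := ((pivSet X)ᶜ.orderIsoOfFin
        (by rw [Finset.card_compl, card_pivSet X hX, Fintype.card_fin]) (Fin.rev i)).2
      intro hmem
      rw [Finset.mem_compl] at this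
      exact this hmem
    · intro hp
      have hp' : p ∈ (pivSet X)ᶜ := Finset.mem_compl.mpr hp
      obtain ⟨i, hi⟩ := ((pivSet X)ᶜ.orderIsoOfFin
        (by rw [Finset.card_compl, card_pivSet X hX, Fintype.card_fin])).surjective ⟨p, hp'⟩
      exact ⟨Fin.rev i, by rw [cnp, Fin.rev_rev, hi]⟩

omit [Fintype F] in
lemma npenum_inj {piv : Fin k → Fin n} {c : Fin (n - k) → Fin n} (h : NPEnum piv c) :
    Function.Injective c := by
  intro i j hij
  by_contra hne
  rcases lt_or_gt_of_ne hne with hlt | hlt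
  · exact absurd hij (ne_of_gt (h.1 i j hlt))
  · exact absurd hij.symm (ne_of_gt (h.1 j i hlt))

omit [Fintype F] in
lemma npenum_unique {piv : Fin k → Fin n} {c c' : Fin (n - k) → Fin n}
    (h : NPEnum piv c) (h' : NPEnum piv c') : c = c' := by
  classical
  set s := univ.filter (fun p : Fin n => ¬∃ r, piv r = p) with hs
  have hmem : ∀ (d : Fin (n - k) → Fin n), NPEnum piv d → ∀ i, d i ∈ s := by
    intro d hd i
    simp only [hs, Finset.mem_filter, Finset.mem_univ, true_and]
    exact (hd.2 (d i)).mp ⟨i, rfl⟩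
  have hcard : s.card = n - k := by
    have himg : s = univ.image c := by
      ext p
      simp only [hs, Finset.mem_filter, Finset.mem_univ, true_and, Finset.mem_image]
      rw [← h.2 p]
    rw [himg, Finset.card_image_of_injective _ (npenum_inj h), Finset.card_univ,
      Fintype.card_fin]
  have hd : ∀ (d : Fin (n - k) → Fin n), NPEnum piv d →
      (fun i => d (Fin.rev i)) = ⇑(s.orderEmbOfFin hcard) := by
    intro d hd'
    apply Finset.orderEmbOfFin_unique hcard (fun i => hmem d hd' _)
    intro i j hij
    exact hd'.1 (Fin.rev j) (Fin.rev i) (Fin.rev_lt_rev.mpr hij)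
  have := (hd c h).trans (hd c' h').symm
  funext i
  have := congrFun this (Fin.rev i)
  simpa [Fin.rev_rev] using this

omit [Fintype F] in
lemma col_formula {piv : Fin k → Fin n} (hmono : StrictMono piv)
    {c : Fin (n - k) → Fin n} (hc : NPEnum piv c) (i : Fin (n - k)) :
    (c i : ℕ) = diagCol piv c i + ((n - k) - 1 - (i : ℕ)) := by
  classical
  have h1 : (univ.filter (fun p : Fin n => p < c i)).card = (c i : ℕ) := by
    rw [show univ.filter (fun p : Fin n => p < c i) = Finset.Iio (c i) by
      ext p; simp [Finset.mem_Iio]]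
    exact Fin.card_Iio (c i)
  have h2 := Finset.card_filter_add_card_filter_not
    (s := univ.filter (fun p : Fin n => p < c i)) (fun p => ∃ r, piv r = p)
  rw [h1, Finset.filter_filter, Finset.filter_filter] at h2
  have hpivpart : (univ.filter (fun p : Fin n => p < c i ∧ ∃ r, piv r = p)).card =
      diagCol piv c i := by
    rw [show univ.filter (fun p : Fin n => p < c i ∧ ∃ r, piv r = p) =
        (univ.filter (fun t : Fin k => piv t < c i)).image piv by
      ext p
      simp only [Finset.mem_filter, Finset.mem_univ, true_and, Finset.mem_image]
      constructor
      · rintro ⟨hlt, r, rfl⟩; exact ⟨r, hlt, rfl⟩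
      · rintro ⟨r, hlt, rfl⟩; exact ⟨hlt, r, rfl⟩]
    rw [Finset.card_image_of_injective _ hmono.injective]
    rfl
  have hnppart : (univ.filter (fun p : Fin n => p < c i ∧ ¬∃ r, piv r = p)).card =
      (n - k) - 1 - (i : ℕ) := by
    rw [show univ.filter (fun p : Fin n => p < c i ∧ ¬∃ r, piv r = p) =
        (univ.filter (fun j : Fin (n - k) => c j < c i)).image c by
      ext p
      simp only [Finset.mem_filter, Finset.mem_univ, true_and, Finset.mem_image]
      constructor
      · rintro ⟨hlt, hnp⟩
        obtain ⟨j, rfl⟩ := (hc.2 p).mpr hnp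
        exact ⟨j, hlt, rfl⟩
      · rintro ⟨j, hlt, rfl⟩
        exact ⟨hlt, ((hc.2 (c j)).mp ⟨j, rfl⟩)⟩]
    rw [Finset.card_image_of_injective _ (npenum_inj hc)]
    rw [show univ.filter (fun j : Fin (n - k) => c j < c i) = Finset.Ioi i by
      ext j
      simp only [Finset.mem_filter, Finset.mem_univ, true_and, Finset.mem_Ioi]
      constructor
      · intro hlt
        rcases lt_trichotomy i j with h | h | h
        · exact h
        · subst h; exact absurd hlt (lt_irrefl _)
        · exact absurd (hc.1 j i h) (not_lt.mpr (le_of_lt hlt))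
      · intro h; exact hc.1 i j h]
    exact Fin.card_Ioi i
  omega

omit [Fintype F] in
lemma diagCol_le {piv : Fin k → Fin n} {c : Fin (n - k) → Fin n} (i : Fin (n - k)) :
    diagCol piv c i ≤ k := by
  classical
  calc (univ.filter (fun t : Fin k => piv t < c i)).card ≤ (univ : Finset (Fin k)).card :=
        Finset.card_filter_le _ _
    _ = k := by simp

omit [Fintype F] in
lemma diagCol_antitone {piv : Fin k → Fin n} {c : Fin (n - k) → Fin n}
    (hc : NPEnum piv c) {i j : Fin (n - k)} (hij : i ≤ j) :
    diagCol piv c j ≤ diagCol piv c i := by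
  classical
  apply Finset.card_le_card
  intro t ht
  simp only [Finset.mem_filter, Finset.mem_univ, true_and] at ht ⊢
  rcases eq_or_lt_of_le hij with rfl | h
  · exact ht
  · exact lt_trans ht (hc.1 i j h)

omit [Fintype F] in
lemma diagSize_le {piv : Fin k → Fin n} {c : Fin (n - k) → Fin n} :
    diagSize piv c ≤ k * (n - k) := by
  calc diagSize piv c ≤ ∑ _i : Fin (n - k), k := Finset.sum_le_sum (fun i _ => diagCol_le i)
    _ = k * (n - k) := by simp [mul_comm]

omit [Fintype F] in
lemma cols_determine {piv piv' : Fin k → Fin n} (hm : StrictMono piv) (hm' : StrictMono piv')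
    {c c' : Fin (n - k) → Fin n} (hc : NPEnum piv c) (hc' : NPEnum piv' c')
    (h : ∀ i, diagCol piv c i = diagCol piv' c' i) : piv = piv' ∧ c = c' := by
  classical
  have hcc : c = c' := by
    funext i
    have := col_formula hm hc i
    have h2 := col_formula hm' hc' i
    apply Fin.ext
    rw [this, h2, h i]
  have hpiv : piv = piv' := by
    have hpmem : ∀ p : Fin n, (∃ r, piv r = p) ↔ (∃ r, piv' r = p) := by
      subst hcc
      intro p
      have e1 := hc.2 p
      have e2 := hc'.2 p
      tauto
    have hrange : ∀ i, piv i ∈ univ.image piv' := by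
      intro i
      obtain ⟨r, hr⟩ := (hpmem (piv i)).mp ⟨i, rfl⟩
      exact Finset.mem_image.mpr ⟨r, Finset.mem_univ r, hr⟩
    have hcard : (univ.image piv').card = k := by
      rw [Finset.card_image_of_injective _ hm'.injective]; simp
    exact (Finset.orderEmbOfFin_unique hcard hrange hm).trans
      (Finset.orderEmbOfFin_unique hcard
        (fun i => Finset.mem_image.mpr ⟨i, Finset.mem_univ i, rfl⟩) hm').symm
  exact ⟨hpiv, hcc⟩

def PrecF {η : ℕ} (G D : Fin η → ℕ) : Prop :=
  ∃ i, (∀ t, t < i → G t = D t) ∧ D i < G i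

omit [Field F] in
lemma PrecF_irrefl {η : ℕ} (D : Fin η → ℕ) : ¬PrecF D D := by
  rintro ⟨i, _, hi⟩; exact absurd hi (lt_irrefl _)

omit [Field F] in
lemma PrecF_trans {η : ℕ} {G E D : Fin η → ℕ} (h1 : PrecF G E) (h2 : PrecF E D) :
    PrecF G D := by
  obtain ⟨i, hi1, hi2⟩ := h1
  obtain ⟨j, hj1, hj2⟩ := h2
  rcases lt_trichotomy i j with h | h | h
  · exact ⟨i, fun t ht => (hi1 t ht).trans (hj1 t (ht.trans h)), by rw [← hj1 i h]; exact hi2⟩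
  · subst h; exact ⟨i, fun t ht => (hi1 t ht).trans (hj1 t ht), lt_trans hj2 hi2⟩
  · exact ⟨j, fun t ht => (hi1 t (ht.trans h)).trans (hj1 t ht), by rw [hi1 j h]; exact hj2⟩

omit [Field F] in
lemma PrecF_total {η : ℕ} {G D : Fin η → ℕ} (h : G ≠ D) : PrecF G D ∨ PrecF D G := by
  classical
  have hne : (univ.filter (fun t : Fin η => G t ≠ D t)).Nonempty := by
    rcases Function.ne_iff.mp h with ⟨t, ht⟩
    exact ⟨t, by simp [ht]⟩
  set i := (univ.filter (fun t : Fin η => G t ≠ D t)).min' hne with hi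
  have hi1 : G i ≠ D i := by
    have := Finset.min'_mem _ hne; simpa using this
  have hi2 : ∀ t, t < i → G t = D t := by
    intro t ht
    by_contra h'
    exact absurd (Finset.min'_le _ t (by simp [h'])) (not_le.mpr ht)
  rcases lt_or_gt_of_ne hi1 with h' | h'
  · exact Or.inr ⟨i, fun t ht => (hi2 t ht).symm, h'⟩
  · exact Or.inl ⟨i, hi2, h'⟩

omit [Fintype F] in
lemma diagInd_lt_of_prec {piv piv' : Fin k → Fin n}
    {c c' : Fin (n - k) → Fin n} (hc : NPEnum piv c) (hc' : NPEnum piv' c')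
    (hsize : diagSize piv c = diagSize piv' c')
    (hprec : PrecF (fun i => diagCol piv' c' i) (fun i => diagCol piv c i)) :
    diagInd piv' c' < diagInd piv c := by
  classical
  apply Finset.card_lt_card
  constructor
  · intro G hG
    simp only [Finset.mem_filter] at hG ⊢
    obtain ⟨hbox, hsum, hp⟩ := hG
    refine ⟨hbox, hsum.trans hsize.symm, ?_⟩
    exact PrecF_trans hp hprec
  · intro hsub
    set E : Fin (n - k) → Fin (k + 1) :=
      fun i => ⟨diagCol piv' c' i, Nat.lt_succ_of_le (diagCol_le i)⟩ with hE
    have hEmem : E ∈ (ferrersBox k (n - k)).filter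
        (fun G : Fin (n - k) → Fin (k + 1) =>
          (∑ i, (G i : ℕ)) = diagSize piv c ∧
            ∃ i, (∀ t, t < i → (G t : ℕ) = diagCol piv c t) ∧ diagCol piv c i < (G i : ℕ)) := by
      simp only [Finset.mem_filter, ferrersBox, Finset.mem_univ, true_and]
      refine ⟨fun i j hij => ?_, ?_, hprec⟩
      · show (E j : ℕ) ≤ (E i : ℕ)
        exact diagCol_antitone hc' hij
      · exact hsize.symm
    have hEnot := hsub hEmem
    simp only [Finset.mem_filter] at hEnot
    obtain ⟨i, -, hlt⟩ := hEnot.2.2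
    exact absurd hlt (lt_irrefl _)

omit [Fintype F] in
lemma cols_eq_of_ind_eq {piv piv' : Fin k → Fin n}
    {c c' : Fin (n - k) → Fin n} (hc : NPEnum piv c) (hc' : NPEnum piv' c')
    (hsize : diagSize piv c = diagSize piv' c')
    (hind : diagInd piv c = diagInd piv' c') :
    ∀ i, diagCol piv c i = diagCol piv' c' i := by
  by_contra h
  push_neg at h
  have hne : (fun i => diagCol piv c i) ≠ (fun i => diagCol piv' c' i) := by
    obtain ⟨i, hi⟩ := h
    intro heq
    exact hi (congrFun heq i)
  rcases PrecF_total hne with h' | h'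
  · exact absurd hind (ne_of_lt (diagInd_lt_of_prec hc' hc hsize.symm h'))
  · exact absurd hind (ne_of_gt (diagInd_lt_of_prec hc hc' hsize h'))

omit [Fintype F] in
lemma diagInd_congr {piv piv' : Fin k → Fin n} {c c' : Fin (n - k) → Fin n}
    (hcols : ∀ i, diagCol piv c i = diagCol piv' c' i) :
    diagInd piv c = diagInd piv' c' := by
  classical
  have hsize : diagSize piv c = diagSize piv' c' := by
    unfold diagSize; exact Finset.sum_congr rfl (fun i _ => hcols i)
  unfold diagInd
  apply Finset.card_nbij' id id
  · intro G hG
    simp only [Finset.mem_coe, Finset.mem_filter] at hG ⊢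
    obtain ⟨hbox, hsum, i, h1, h2⟩ := hG
    exact ⟨hbox, hsum.trans hsize, i, fun t ht => (h1 t ht).trans (hcols t), (hcols i) ▸ h2⟩
  · intro G hG
    simp only [Finset.mem_coe, Finset.mem_filter] at hG ⊢
    obtain ⟨hbox, hsum, i, h1, h2⟩ := hG
    exact ⟨hbox, hsum.trans hsize.symm, i, fun t ht => (h1 t ht).trans (hcols t).symm,
      (hcols i) ▸ h2⟩
  · intro G _; rfl
  · intro G _; rfl

lemma digits_unique (q : ℕ) (hq : 2 ≤ q) :
    ∀ m (f g : ℕ → ℕ), (∀ j, f j < q) → (∀ j, g j < q) →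
      (∑ j ∈ Finset.range m, f j * q ^ j = ∑ j ∈ Finset.range m, g j * q ^ j) →
      ∀ j, j < m → f j = g j := by
  intro m
  induction m with
  | zero => intro f g _ _ _ j hj; omega
  | succ m ih =>
    intro f g hf hg hsum j hj
    have hre : ∀ h : ℕ → ℕ, ∑ j ∈ Finset.range (m + 1), h j * q ^ j =
        q * (∑ j ∈ Finset.range m, h (j + 1) * q ^ j) + h 0 := by
      intro h
      rw [Finset.sum_range_succ' (fun j => h j * q ^ j) m]
      rw [Finset.mul_sum]
      congr 1
      · apply Finset.sum_congr rfl
        intro x _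
        ring
      · simp
    rw [hre f, hre g] at hsum
    have h0 : f 0 = g 0 := by
      have h1 := congrArg (· % q) hsum
      simpa [Nat.mul_add_mod, Nat.mod_eq_of_lt (hf 0), Nat.mod_eq_of_lt (hg 0)] using h1
    have hA : (∑ j ∈ Finset.range m, f (j + 1) * q ^ j) =
        (∑ j ∈ Finset.range m, g (j + 1) * q ^ j) := by
      have hq0 : 0 < q := by omega
      have h1 := congrArg (· / q) hsum
      simpa [Nat.mul_add_div hq0, Nat.div_eq_of_lt (hf 0), Nat.div_eq_of_lt (hg 0)] using h1
    rcases Nat.eq_zero_or_pos j with rfl | hjpos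
    · exact h0
    · obtain ⟨j', rfl⟩ : ∃ j', j = j' + 1 := ⟨j - 1, by omega⟩
      exact ih (fun j => f (j + 1)) (fun j => g (j + 1)) (fun j => hf _) (fun j => hg _) hA j' (by omega)

lemma posInRow_pos {piv : Fin k → Fin n} {c : Fin (n - k) → Fin n} {t : Fin k}
    {i : Fin (n - k)} (h : piv t < c i) : 1 ≤ posInRow piv c t i := by
  classical
  rw [posInRow, Nat.one_le_iff_ne_zero, ← Nat.pos_iff_ne_zero, Finset.card_pos]
  exact ⟨i, by simp [h]⟩

lemma posInRow_le_rowdots {piv : Fin k → Fin n} {c : Fin (n - k) → Fin n} (t : Fin k)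
    (i : Fin (n - k)) : posInRow piv c t i ≤ rowdots piv c t := by
  classical
  apply Finset.card_le_card
  intro x hx
  simp only [Finset.mem_filter, Finset.mem_univ, true_and] at hx ⊢
  exact hx.2

lemma rowPrefix_add_rowdots_le {piv : Fin k → Fin n} {c : Fin (n - k) → Fin n} {t t' : Fin k}
    (h : t < t') : rowPrefix piv c t + rowdots piv c t ≤ rowPrefix piv c t' := by
  classical
  have hsub : insert t (univ.filter (fun s : Fin k => s < t)) ⊆
      univ.filter (fun s : Fin k => s < t') := by
    intro x hx
    rcases Finset.mem_insert.mp hx with rfl | hx'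
    · simp [h]
    · simp only [Finset.mem_filter, Finset.mem_univ, true_and] at hx' ⊢
      exact lt_trans hx' h
  calc rowPrefix piv c t + rowdots piv c t
      = ∑ s ∈ insert t (univ.filter (fun s : Fin k => s < t)), rowdots piv c s := by
        rw [Finset.sum_insert (by simp), rowPrefix, add_comm]
    _ ≤ ∑ s ∈ univ.filter (fun s : Fin k => s < t'), rowdots piv c s :=
        Finset.sum_le_sum_of_subset hsub
    _ = rowPrefix piv c t' := rfl

lemma diagSize_eq_sum_rowdots {piv : Fin k → Fin n} {c : Fin (n - k) → Fin n} :
    diagSize piv c = ∑ t, rowdots piv c t := by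
  classical
  unfold diagSize diagCol rowdots
  simp only [Finset.card_filter]
  rw [Finset.sum_comm]

lemma rowPrefix_add_rowdots_le_diagSize {piv : Fin k → Fin n} {c : Fin (n - k) → Fin n}
    (t : Fin k) : rowPrefix piv c t + rowdots piv c t ≤ diagSize piv c := by
  classical
  rw [diagSize_eq_sum_rowdots]
  calc rowPrefix piv c t + rowdots piv c t
      = ∑ s ∈ insert t (univ.filter (fun s : Fin k => s < t)), rowdots piv c s := by
        rw [Finset.sum_insert (by simp), rowPrefix, add_comm]
    _ ≤ ∑ t, rowdots piv c t := Finset.sum_le_sum_of_subset (by intro x _; simp)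

lemma pos_le_diagSize {piv : Fin k → Fin n} {c : Fin (n - k) → Fin n} (t : Fin k)
    (i : Fin (n - k)) :
    rowPrefix piv c t + posInRow piv c t i ≤ diagSize piv c :=
  le_trans (by have := posInRow_le_rowdots (piv := piv) (c := c) t i; omega)
    (rowPrefix_add_rowdots_le_diagSize t)

lemma posInRow_strictMono {piv : Fin k → Fin n} {c : Fin (n - k) → Fin n} {t : Fin k}
    {i i' : Fin (n - k)} (hii : i < i') (h' : piv t < c i') :
    posInRow piv c t i < posInRow piv c t i' := by
  classical
  apply Finset.card_lt_card
  constructor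
  · intro x hx
    simp only [Finset.mem_filter, Finset.mem_univ, true_and] at hx ⊢
    exact ⟨le_trans hx.1 (le_of_lt hii), hx.2⟩
  · intro hsub
    have := hsub (by simp [h'] : i' ∈ univ.filter (fun i'' => i'' ≤ i' ∧ piv t < c i''))
    simp only [Finset.mem_filter, Finset.mem_univ, true_and] at this
    exact absurd this.1 (not_le.mpr hii)

lemma pos_inj {piv : Fin k → Fin n} {c : Fin (n - k) → Fin n} {t t' : Fin k}
    {i i' : Fin (n - k)} (hd : piv t < c i) (hd' : piv t' < c i')
    (h : rowPrefix piv c t + posInRow piv c t i = rowPrefix piv c t' + posInRow piv c t' i') :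
    t = t' ∧ i = i' := by
  rcases lt_trichotomy t t' with htt | htt | htt
  · exfalso
    have h1 : rowPrefix piv c t + posInRow piv c t i ≤ rowPrefix piv c t + rowdots piv c t := by
      have := posInRow_le_rowdots (piv := piv) (c := c) t i; omega
    have h2 := rowPrefix_add_rowdots_le (piv := piv) (c := c) htt
    have h3 := posInRow_pos (piv := piv) (c := c) hd'
    omega
  · refine ⟨htt, ?_⟩
    subst htt
    have hpp : posInRow piv c t i = posInRow piv c t i' := by omega
    rcases lt_trichotomy i i' with hii | hii | hii
    · exact absurd hpp (ne_of_lt (posInRow_strictMono hii hd'))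
    · exact hii
    · exact absurd hpp.symm (ne_of_lt (posInRow_strictMono hii hd))
  · exfalso
    have h1 : rowPrefix piv c t' + posInRow piv c t' i' ≤
        rowPrefix piv c t' + rowdots piv c t' := by
      have := posInRow_le_rowdots (piv := piv) (c := c) t' i'; omega
    have h2 := rowPrefix_add_rowdots_le (piv := piv) (c := c) htt
    have h3 := posInRow_pos (piv := piv) (c := c) hd
    omega

omit [Fintype F] in
lemma entries_eq_of_xVal_eq (q : ℕ) (hq2 : 2 ≤ q) (e : F ≃ Fin q)
    {piv : Fin k → Fin n} {c : Fin (n - k) → Fin n}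
    (A B : Fin k → Fin n → F)
    (hx : xVal q e A piv c = xVal q e B piv c) :
    ∀ t i, piv t < c i → A t (c i) = B t (c i) := by
  classical
  set m := diagSize piv c with hm
  set s : Finset (Fin k × Fin (n - k)) := univ.filter (fun d => piv d.1 < c d.2) with hs
  set expo : Fin k × Fin (n - k) → ℕ :=
    fun d => m - rowPrefix piv c d.1 - posInRow piv c d.1 d.2 with hexpo
  have hposle : ∀ d ∈ s, rowPrefix piv c d.1 + posInRow piv c d.1 d.2 ≤ m :=
    fun d _ => pos_le_diagSize d.1 d.2
  have hpos1 : ∀ d ∈ s, 1 ≤ posInRow piv c d.1 d.2 := by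
    intro d hd
    simp only [hs, Finset.mem_filter, Finset.mem_univ, true_and] at hd
    exact posInRow_pos hd
  have hexpolt : ∀ d ∈ s, expo d < m := by
    intro d hd
    have h1 := hposle d hd
    have h2 := hpos1 d hd
    simp only [hexpo]
    omega
  have hinj : ∀ d ∈ s, ∀ d' ∈ s, expo d = expo d' → d = d' := by
    intro d hd d' hd'  hdd
    have h1 := hposle d hd
    have h2 := hposle d' hd'
    simp only [hexpo] at hdd
    have heq : rowPrefix piv c d.1 + posInRow piv c d.1 d.2 =
        rowPrefix piv c d'.1 + posInRow piv c d'.1 d'.2 := by omega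
    simp only [hs, Finset.mem_filter, Finset.mem_univ, true_and] at hd hd'
    obtain ⟨h3, h4⟩ := pos_inj hd hd' heq
    exact Prod.ext h3 h4
  -- rewrite xVal as a sum over digits
  have hxv : ∀ C : Fin k → Fin n → F,
      xVal q e C piv c = ∑ j ∈ Finset.range m,
        (∑ d ∈ s.filter (fun d => expo d = j), (e (C d.1 (c d.2)) : ℕ)) * q ^ j := by
    intro C
    have h1 : xVal q e C piv c = ∑ d : Fin k × Fin (n - k), if piv d.1 < c d.2 then
        (e (C d.1 (c d.2)) : ℕ) * q ^ (diagSize piv c - rowPrefix piv c d.1 -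
          posInRow piv c d.1 d.2) else 0 := by
      rw [xVal, Fintype.sum_prod_type]
    have h2 : (∑ d : Fin k × Fin (n - k), if piv d.1 < c d.2 then
        (e (C d.1 (c d.2)) : ℕ) * q ^ (diagSize piv c - rowPrefix piv c d.1 -
          posInRow piv c d.1 d.2) else 0) =
        ∑ d ∈ s, (e (C d.1 (c d.2)) : ℕ) * q ^ expo d := by
      rw [hs]
      exact (Finset.sum_filter _ _).symm
    rw [h1, h2]
    rw [← Finset.sum_fiberwise_of_maps_to (fun d hd => Finset.mem_range.mpr (hexpolt d hd))
      (fun d => (e (C d.1 (c d.2)) : ℕ) * q ^ expo d)]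
    apply Finset.sum_congr rfl
    intro j _
    rw [Finset.sum_mul]
    apply Finset.sum_congr rfl
    intro d hd
    simp only [Finset.mem_filter] at hd
    rw [hd.2]
  have hdig : ∀ (C : Fin k → Fin n → F) (j : ℕ),
      (∑ d ∈ s.filter (fun d => expo d = j), (e (C d.1 (c d.2)) : ℕ)) < q := by
    intro C j
    have hcard : (s.filter (fun d => expo d = j)).card ≤ 1 := by
      apply Finset.card_le_one.mpr
      intro a ha b hb
      simp only [Finset.mem_filter] at ha hb
      exact hinj a ha.1 b hb.1 (ha.2.trans hb.2.symm)
    rcases Finset.eq_empty_or_nonempty (s.filter (fun d => expo d = j)) with hemp | hne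
    · rw [hemp, Finset.sum_empty]; omega
    · have : (s.filter (fun d => expo d = j)).card = 1 :=
        le_antisymm hcard (Finset.card_pos.mpr hne)
      obtain ⟨d, hd⟩ := Finset.card_eq_one.mp this
      rw [hd, Finset.sum_singleton]
      exact (e (C d.1 (c d.2))).isLt
  have hcoef := digits_unique q hq2 m _ _ (hdig A) (hdig B) (by rw [← hxv A, ← hxv B]; exact hx)
  intro t i hti
  have hdmem : (t, i) ∈ s := by simp [hs, hti]
  have hfib : s.filter (fun d => expo d = expo (t, i)) = {(t, i)} := by
    ext d
    simp only [Finset.mem_filter, Finset.mem_singleton]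
    constructor
    · rintro ⟨hd1, hd2⟩; exact hinj d hd1 (t, i) hdmem hd2
    · rintro rfl; exact ⟨hdmem, rfl⟩
  have := hcoef (expo (t, i)) (hexpolt (t, i) hdmem)
  rw [hfib, Finset.sum_singleton, Finset.sum_singleton] at this
  exact e.injective (Fin.ext this)

variable (q : ℕ) (e : F ≃ Fin q)

noncomputable def keyL (X : Submodule F (Fin n → F)) (hX : Module.finrank F X = k) :
    ℕ ×ₗ (ℕ ×ₗ ℕ) :=
  toLex (k * (n - k) - diagSize (cpiv X hX) (cnp X hX),
    toLex (diagInd (cpiv X hX) (cnp X hX),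
      xVal q e (cA X hX) (cpiv X hX) (cnp X hX)))

lemma ftLt_iff_keyL {X Y : Submodule F (Fin n → F)} (hX : Module.finrank F X = k)
    (hY : Module.finrank F Y = k) :
    ftLt q e n k X Y ↔ keyL q e X hX < keyL q e Y hY := by
  have hbX : diagSize (cpiv X hX) (cnp X hX) ≤ k * (n - k) := diagSize_le
  have hbY : diagSize (cpiv Y hY) (cnp Y hY) ≤ k * (n - k) := diagSize_le
  constructor
  · rintro ⟨A, pivA, cA', B, pivB, cB, hgA, hcA, hgB, hcB, hdisj⟩
    have hpA := gen_piv_unique hX hgA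
    have hAA := gen_A_unique hX hgA
    subst hpA
    have hcA' : cA' = cnp X hX := npenum_unique hcA (cnp_npenum X hX)
    subst hcA'
    have hpB := gen_piv_unique hY hgB
    have hBB := gen_A_unique hY hgB
    subst hpB
    have hcB' : cB = cnp Y hY := npenum_unique hcB (cnp_npenum Y hY)
    subst hcB'
    subst hAA
    subst hBB
    rw [keyL, keyL, Prod.Lex.lt_iff]
    rcases hdisj with hlt | ⟨hsz, hind⟩ | ⟨hcols, hxv⟩
    · left; simp only [ofLex_toLex]; omega
    · right
      constructor
      · simp only [ofLex_toLex]; omega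
      · rw [Prod.Lex.lt_iff]; left; exact hind
    · right
      have hsz : diagSize (cpiv X hX) (cnp X hX) = diagSize (cpiv Y hY) (cnp Y hY) := by
        unfold diagSize; exact Finset.sum_congr rfl (fun i _ => hcols i)
      constructor
      · simp only [ofLex_toLex]; omega
      · rw [Prod.Lex.lt_iff]
        right
        exact ⟨diagInd_congr hcols, hxv⟩
  · intro h
    rw [keyL, keyL, Prod.Lex.lt_iff] at h
    refine ⟨cA X hX, cpiv X hX, cnp X hX, cA Y hY, cpiv Y hY, cnp Y hY,
      cGeneratesRREF X hX, cnp_npenum X hX, cGeneratesRREF Y hY, cnp_npenum Y hY, ?_⟩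
    rcases h with h | ⟨h1, h2⟩
    · simp only [ofLex_toLex] at h
      left; omega
    · simp only [ofLex_toLex] at h1
      have hsz : diagSize (cpiv X hX) (cnp X hX) = diagSize (cpiv Y hY) (cnp Y hY) := by
        omega
      rw [Prod.Lex.lt_iff] at h2
      rcases h2 with h2 | ⟨h2, h3⟩
      · exact Or.inr (Or.inl ⟨hsz, h2⟩)
      · refine Or.inr (Or.inr ⟨?_, h3⟩)
        exact cols_eq_of_ind_eq (cnp_npenum X hX) (cnp_npenum Y hY) hsz h2

lemma keyL_inj (hq2 : 2 ≤ q) {X Y : Submodule F (Fin n → F)}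
    (hX : Module.finrank F X = k) (hY : Module.finrank F Y = k)
    (h : keyL q e X hX = keyL q e Y hY) : X = Y := by
  have hbX : diagSize (cpiv X hX) (cnp X hX) ≤ k * (n - k) := diagSize_le
  have hbY : diagSize (cpiv Y hY) (cnp Y hY) ≤ k * (n - k) := diagSize_le
  rw [keyL, keyL] at h
  have h' := congrArg ofLex h
  have h1 : k * (n - k) - diagSize (cpiv X hX) (cnp X hX) =
      k * (n - k) - diagSize (cpiv Y hY) (cnp Y hY) := congrArg Prod.fst h'
  have h2' := congrArg Prod.snd h'
  have h2 := congrArg ofLex h2'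
  have hind : diagInd (cpiv X hX) (cnp X hX) = diagInd (cpiv Y hY) (cnp Y hY) :=
    congrArg Prod.fst h2
  have hxv : xVal q e (cA X hX) (cpiv X hX) (cnp X hX) =
      xVal q e (cA Y hY) (cpiv Y hY) (cnp Y hY) := congrArg Prod.snd h2
  have hsz : diagSize (cpiv X hX) (cnp X hX) = diagSize (cpiv Y hY) (cnp Y hY) := by omega
  have hcols := cols_eq_of_ind_eq (cnp_npenum X hX) (cnp_npenum Y hY) hsz hind
  obtain ⟨hpiv, hcnp⟩ := cols_determine (cpiv_strictMono X hX) (cpiv_strictMono Y hY)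
    (cnp_npenum X hX) (cnp_npenum Y hY) hcols
  rw [← hpiv, ← hcnp] at hxv
  have hent := entries_eq_of_xVal_eq q hq2 e (cA X hX) (cA Y hY) hxv
  have hmat : cA X hX = cA Y hY := by
    funext t j
    rcases Classical.em (∃ r, cpiv X hX r = j) with ⟨r, rfl⟩ | hnp
    · rw [cA_pivot X hX t r]
      have := cA_pivot Y hY t r
      rw [← hpiv] at this
      rw [this]
    · obtain ⟨i, rfl⟩ := ((cnp_npenum X hX).2 j).mpr hnp
      rcases lt_trichotomy (cpiv X hX t) (cnp X hX i) with hlt | heq | hgt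
      · exact hent t i hlt
      · exact absurd ⟨t, heq⟩ hnp
      · rw [cA_left_zero X hX t _ hgt]
        have h2 := cA_left_zero Y hY t (cnp X hX i)
        rw [← hpiv] at h2
        rw [h2 hgt]
  have := cA_span X hX
  rw [hmat, cA_span Y hY] at this
  exact this.symm

end FT

/-- **`Ind_1` is a bijection onto `{0,…,[n choose k]_q - 1}`.**
Let `q` be a prime power and `F` a field with `q` elements, identified with
`{0,…,q-1}` via `e`, and `0 ≤ k ≤ n`.  Then the map `Ind_1`, assigning to each
`k`-dimensional subspace `X` of `F^n` the number of `k`-dimensional subspaces `Y`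
with `Y < X` in the Ferrers-tableaux order, is a bijection from the set of
`k`-dimensional subspaces of `F^n` onto `{0,…,[n choose k]_q - 1}`:
(1) every `k`-dimensional subspace `X` has `Ind_1(X) < [n choose k]_q`; and
(2) for every `0 ≤ i ≤ [n choose k]_q - 1` there is a unique `k`-dimensional
subspace `X` with `Ind_1(X) = i`. -/
theorem stmt_14 (q n k : ℕ) (hq : IsPrimePow q) (F : Type) [Field F] [Fintype F]
    (hF : Fintype.card F = q) (hkn : k ≤ n)
    (e : F ≃ Fin q) (he0 : (e 0 : ℕ) = 0) (he1 : (e 1 : ℕ) = 1) :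
    (∀ X : Submodule F (Fin n → F), Module.finrank F X = k →
      ftInd q e n k X < gaussNum F n k) ∧
    (∀ i : ℕ, i < gaussNum F n k →
      ∃! X : Submodule F (Fin n → F), Module.finrank F X = k ∧ ftInd q e n k X = i) := by
  classical
  have hq2 : 2 ≤ q := hq.two_le
  have hfin : Finite (Submodule F (Fin n → F)) :=
    Finite.of_injective (fun X => (X : Set (Fin n → F))) SetLike.coe_injective
  letI : Fintype (Submodule F (Fin n → F)) := Fintype.ofFinite _
  letI : Fintype {X : Submodule F (Fin n → F) // Module.finrank F X = k} :=
    Fintype.ofFinite _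
  set κ : {X : Submodule F (Fin n → F) // Module.finrank F X = k} → ℕ ×ₗ (ℕ ×ₗ ℕ) :=
    fun X => FT.keyL q e X.1 X.2 with hκ
  have keyinj : Function.Injective κ := by
    intro X Y h
    exact Subtype.ext (FT.keyL_inj q e hq2 X.2 Y.2 h)
  set N := Fintype.card {X : Submodule F (Fin n → F) // Module.finrank F X = k} with hN
  have hNg : gaussNum F n k = N := by
    rw [gaussNum, Nat.card_eq_fintype_card]
  set T : Finset (ℕ ×ₗ (ℕ ×ₗ ℕ)) := Finset.univ.image κ with hT
  have hTcard : T.card = N := by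
    rw [hT, Finset.card_image_of_injective _ keyinj, Finset.card_univ]
  set iso := T.orderIsoOfFin hTcard with hiso
  have memT : ∀ X : {X : Submodule F (Fin n → F) // Module.finrank F X = k}, κ X ∈ T := by
    intro X
    exact Finset.mem_image.mpr ⟨X, Finset.mem_univ X, rfl⟩
  set idx : {X : Submodule F (Fin n → F) // Module.finrank F X = k} → Fin N :=
    fun X => iso.symm ⟨κ X, memT X⟩ with hidx
  have idxinj : Function.Injective idx := by
    intro X Y h
    apply keyinj
    have := congrArg iso h
    rw [OrderIso.apply_symm_apply, OrderIso.apply_symm_apply] at this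
    exact congrArg Subtype.val this
  have hftInd : ∀ X : {X : Submodule F (Fin n → F) // Module.finrank F X = k},
      ftInd q e n k X.1 = (idx X : ℕ) := by
    intro X
    have e1 : {Y : Submodule F (Fin n → F) // Module.finrank F Y = k ∧ ftLt q e n k Y X.1} ≃
        {Y : {X : Submodule F (Fin n → F) // Module.finrank F X = k} //
          ftLt q e n k Y.1 X.1} :=
      ⟨fun Y => ⟨⟨Y.1, Y.2.1⟩, Y.2.2⟩, fun Y => ⟨Y.1.1, Y.1.2, Y.2⟩,
        fun Y => rfl, fun Y => rfl⟩
    rw [ftInd, Nat.card_congr e1, Nat.card_eq_fintype_card, Fintype.card_subtype]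
    have e2 : (Finset.univ.filter
        (fun Y : {X : Submodule F (Fin n → F) // Module.finrank F X = k} =>
          ftLt q e n k Y.1 X.1)).card = (T.filter (fun t => t < κ X)).card := by
      apply Finset.card_nbij κ
      · intro Y hY
        simp only [Finset.mem_coe, Finset.mem_filter, Finset.mem_univ, true_and] at hY ⊢
        exact ⟨memT Y, (FT.ftLt_iff_keyL q e Y.2 X.2).mp hY⟩
      · intro Y _ Y' _ h
        exact keyinj h
      · intro t ht
        simp only [Finset.mem_coe, Finset.mem_filter] at ht
        obtain ⟨Y, _, rfl⟩ := Finset.mem_image.mp ht.1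
        refine ⟨Y, ?_, rfl⟩
        simp only [Finset.coe_filter, Finset.mem_univ, true_and, Set.mem_setOf_eq]
        exact (FT.ftLt_iff_keyL q e Y.2 X.2).mpr ht.2
    have e3 : (Finset.univ.filter (fun j : Fin N => j < idx X)).card =
        (T.filter (fun t => t < κ X)).card := by
      apply Finset.card_nbij (fun j => ((iso j : ↥T) : ℕ ×ₗ (ℕ ×ₗ ℕ)))
      · intro j hj
        simp only [Finset.mem_coe, Finset.mem_filter, Finset.mem_univ, true_and] at hj ⊢
        refine ⟨(iso j).2, ?_⟩
        have h4 : iso j < iso (idx X) := by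
          rw [OrderIso.lt_iff_lt]
          exact hj
        rw [hidx, OrderIso.apply_symm_apply] at h4
        exact Subtype.coe_lt_coe.mpr h4
      · intro j _ j' _ h
        exact iso.injective (Subtype.ext h)
      · intro t ht
        simp only [Finset.mem_coe, Finset.mem_filter] at ht
        refine ⟨iso.symm ⟨t, ht.1⟩, ?_, ?_⟩
        · simp only [Finset.coe_filter, Finset.mem_univ, true_and, Set.mem_setOf_eq]
          rw [hidx, ← OrderIso.lt_iff_lt iso, OrderIso.apply_symm_apply,
            OrderIso.apply_symm_apply]
          exact Subtype.mk_lt_mk.mpr ht.2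
        · exact congrArg Subtype.val (iso.apply_symm_apply ⟨t, ht.1⟩)
    rw [e2, ← e3]
    rw [show Finset.univ.filter (fun j : Fin N => j < idx X) = Finset.Iio (idx X) by
      ext j; simp]
    exact Fin.card_Iio _
  have idxsurj : Function.Surjective idx := by
    have : Function.Bijective idx := (Fintype.bijective_iff_injective_and_card idx).mpr
      ⟨idxinj, by rw [hN, Fintype.card_fin]⟩
    exact this.2
  constructor
  · intro X hXk
    rw [hNg, hftInd ⟨X, hXk⟩]
    exact (idx ⟨X, hXk⟩).isLt
  · intro i hi
    rw [hNg] at hi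
    obtain ⟨X, hX⟩ := idxsurj ⟨i, hi⟩
    refine ⟨X.1, ⟨X.2, ?_⟩, ?_⟩
    · rw [hftInd X, hX]
    · rintro Y ⟨hYk, hYi⟩
      have h1 := hftInd ⟨Y, hYk⟩
      rw [hYi] at h1
      have h2 : idx ⟨Y, hYk⟩ = ⟨i, hi⟩ := Fin.ext h1.symm
      have h3 : (⟨Y, hYk⟩ : {X : Submodule F (Fin n → F) // Module.finrank F X = k}) = X :=
        idxinj (h2.trans hX.symm)
      exact congrArg Subtype.val h3
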